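/- Let S be a positive face structure of dimension n ≥ k. Then both the k-th domain d^{(k)}S and the k-th codomain c^{(k)}S are positive face structures of dimension k, where d^{(k)}S has faces (d^{(k)}S)_k = S_k − γ(S_{k+1}), (d^{(k)}S)_l = S_l for l < k, empty above k; and c^{(k)}S has faces (c^{(k)}S)_k = S_k − δ(S_{k+1}), (c^{(k)}S)_{k−1} = S_{k−1} − ι(S_{k+1}), (c^{(k)}S)_l = S_l for l < k−1, empty above k. -/

import Mathlib

/-- A pre-hypergraph: dimension-indexed finite sets of faces together with
codomain functions `gam k : S_{k+1} → S_k` and domain assignments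
`del k : S_{k+1} → Finset S_k`. -/
structure PreHG where
  faces : ℕ → Finset ℕ
  gam : ℕ → ℕ → ℕ
  del : ℕ → ℕ → Finset ℕ

namespace PreHG

/-- δ extended to sets of faces. -/
def delS (S : PreHG) (k : ℕ) (A : Finset ℕ) : Finset ℕ := A.biUnion (S.del k)

/-- γ extended to sets of faces. -/
def gamS (S : PreHG) (k : ℕ) (A : Finset ℕ) : Finset ℕ := A.image (S.gam k)

/-- The set `ι(a) = δδ(a) ∩ γδ(a)` of internal faces of a face `a` of dimension `k+2`
(the result lives in dimension `k`). -/
def iota (S : PreHG) (k : ℕ) (a : ℕ) : Finset ℕ :=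
  S.delS k (S.del (k+1) a) ∩ S.gamS k (S.del (k+1) a)

/-- One step of the upper order: `a ⊲⁺ b` on faces of dimension `k`:
there is `α` of dimension `k+1` with `a ∈ δ(α)` and `γ(α) = b`. -/
def ltPlusOne (S : PreHG) (k : ℕ) (a b : ℕ) : Prop :=
  ∃ α ∈ S.faces (k+1), a ∈ S.del k α ∧ S.gam k α = b

/-- The upper order `<⁺` on faces of dimension `k` (transitive closure of `⊲⁺`). -/
def ltPlus (S : PreHG) (k : ℕ) : ℕ → ℕ → Prop :=
  Relation.TransGen (S.ltPlusOne k)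

/-- One step of the lower order: `a ⊲⁻ b` iff `γ(a) ∈ δ(b)`, on faces of dimension `k`
(the empty relation in dimension 0). -/
def ltMinusOne (S : PreHG) : ℕ → ℕ → ℕ → Prop
  | 0, _, _ => False
  | (k+1), a, b => a ∈ S.faces (k+1) ∧ b ∈ S.faces (k+1) ∧ S.gam k a ∈ S.del k b

/-- The lower order `<⁻` on faces of dimension `k` (transitive closure of `⊲⁻`). -/
def ltMinus (S : PreHG) (k : ℕ) : ℕ → ℕ → Prop :=
  Relation.TransGen (S.ltMinusOne k)

/-- Comparability in the upper order. -/
def perpPlus (S : PreHG) (k : ℕ) (a b : ℕ) : Prop := S.ltPlus k a b ∨ S.ltPlus k b a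

/-- Comparability in the lower order. -/
def perpMinus (S : PreHG) (k : ℕ) (a b : ℕ) : Prop := S.ltMinus k a b ∨ S.ltMinus k b a

/-- Iterated codomain `γ^{(l)}`: maps a face of dimension `l+m` down to dimension `l`. -/
def gDown (S : PreHG) (l : ℕ) : ℕ → ℕ → ℕ
  | 0, a => a
  | (m+1), a => gDown S l m (S.gam (l+m) a)

/-- The axioms of a positive hypergraph. -/
def IsHG (S : PreHG) : Prop :=
  (∀ k a, a ∈ S.faces (k+1) → S.gam k a ∈ S.faces k) ∧
  (∀ k a, a ∈ S.faces (k+1) → S.del k a ⊆ S.faces k) ∧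
  (∀ k a, a ∈ S.faces (k+1) → (S.del k a).Nonempty) ∧
  (∀ a ∈ S.faces 1, (S.del 0 a).card = 1) ∧
  (∃ N, ∀ k, N ≤ k → S.faces k = ∅)

/-- Globularity: for faces of dimension ≥ 2,
`{γγ(a)} = γδ(a) − δδ(a)` and `δγ(a) = δδ(a) − γδ(a)`. -/
def Globular (S : PreHG) : Prop :=
  ∀ k a, a ∈ S.faces (k+2) →
    ({S.gam k (S.gam (k+1) a)} : Finset ℕ)
        = S.gamS k (S.del (k+1) a) \ S.delS k (S.del (k+1) a) ∧
      S.del k (S.gam (k+1) a)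
        = S.delS k (S.del (k+1) a) \ S.gamS k (S.del (k+1) a)

/-- Strictness: `<⁺` is irreflexive in every dimension. -/
def StrictPlus (S : PreHG) : Prop := ∀ k, ∀ a ∈ S.faces k, ¬ S.ltPlus k a a

/-- `<⁺` is linear in dimension 0. -/
def LinearZero (S : PreHG) : Prop :=
  ∀ a ∈ S.faces 0, ∀ b ∈ S.faces 0, a = b ∨ S.ltPlus 0 a b ∨ S.ltPlus 0 b a

/-- Disjointness: no two faces of positive dimension are comparable in both orders. -/
def Disjointness (S : PreHG) : Prop :=
  ∀ k a b, a ∈ S.faces (k+1) → b ∈ S.faces (k+1) →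
    ¬ (S.perpPlus (k+1) a b ∧ S.perpMinus (k+1) a b)

/-- Pencil linearity: γ-fibers and δ-fibers are linearly ordered by `<⁺`. -/
def Pencil (S : PreHG) : Prop :=
  ∀ k x,
    (∀ a b, a ∈ S.faces (k+1) → b ∈ S.faces (k+1) →
      S.gam k a = x → S.gam k b = x → a = b ∨ S.perpPlus (k+1) a b) ∧
    (∀ a b, a ∈ S.faces (k+1) → b ∈ S.faces (k+1) →
      x ∈ S.del k a → x ∈ S.del k b → a = b ∨ S.perpPlus (k+1) a b)

/-- A positive face structure: a nonempty positive hypergraph satisfying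
globularity, strictness, disjointness and pencil linearity. -/
def IsPFS (S : PreHG) : Prop :=
  S.IsHG ∧ (S.faces 0).Nonempty ∧ S.Globular ∧ S.StrictPlus ∧ S.LinearZero ∧
    S.Disjointness ∧ S.Pencil

end PreHG

/-- The `k`-th domain `d^{(k)}S`. -/
def PreHG.dTrunc (S : PreHG) (k : ℕ) : PreHG where
  faces := fun l =>
    if l < k then S.faces l
    else if l = k then S.faces k \ S.gamS k (S.faces (k+1))
    else ∅
  gam := S.gam
  del := S.del

/-- The `k`-th codomain `c^{(k)}S`. -/
def PreHG.cTrunc (S : PreHG) (k : ℕ) : PreHG where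
  faces := fun l =>
    if l + 1 < k then S.faces l
    else if l + 1 = k then S.faces l \ (S.faces (k+1)).biUnion (S.iota l)
    else if l = k then S.faces k \ S.delS k (S.faces (k+1))
    else ∅
  gam := S.gam
  del := S.del

/-- `S` has dimension exactly `n`. -/
def PreHG.dimIs (S : PreHG) (n : ℕ) : Prop :=
  (S.faces n).Nonempty ∧ ∀ m, n < m → S.faces m = ∅

/-!
The domain `d^{(k)}S` is treated directly. Only faces of dimension `k` are removed, namely
codomains `γ(W)` of `(k+1)`-faces, and a step of `<⁺` in dimension `k-1` through `γ(W)` is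
replaced, by globularity, by a chain through the faces of `δ(W)`. So `<⁺` on the remaining
faces is the induced order, and all axioms pass to the restriction.

For the codomain one first reduces to `dim S = k+1`, using `c^{(k)}S = c^{(k)}c^{(k+1)}S`.
Then the faces kept in dimension `k` are the external ones (not in `δ(S_{k+1})`), and those
kept in dimension `k-1` are the non-internal ones (not in `ι(S_{k+1})`). Pencil linearity and
disjointness show that for an external `α`, neither `γ(α)` nor a face of `δ(α)` is internal.
They also show that a chain entering the interior of a `(k+1)`-face `A` can be redirected to
`γγ(A)` without getting longer. Hence a shortest `<⁺`-chain between non-internal faces meets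
no internal face, and each of its steps lifts to an external witness.
-/

open Relation

def RelIter {α : Type*} (r : α → α → Prop) : ℕ → α → α → Prop
  | 0, a, b => a = b
  | n + 1, a, c => ∃ b, RelIter r n a b ∧ r b c

theorem RelIter.transGen {α : Type*} {r : α → α → Prop} {a : α} {n : ℕ} :
    ∀ {b}, RelIter r (n + 1) a b → TransGen r a b := by
  induction n with
  | zero => rintro b ⟨_, rfl, h⟩; exact .single h
  | succ n ih => rintro b ⟨_, h, h'⟩; exact (ih h).tail h'

theorem TransGen.exists_relIter {α : Type*} {r : α → α → Prop} {a b : α}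
    (h : TransGen r a b) : ∃ n, RelIter r (n + 1) a b := by
  induction h with
  | single h => exact ⟨0, _, rfl, h⟩
  | tail _ h ih =>
    obtain ⟨n, hn⟩ := ih
    exact ⟨n + 1, _, hn, h⟩

theorem wellFounded_of_isStrictOrder_of_mem {α : Type*} {r : α → α → Prop}
    [IsStrictOrder α r] (s : Finset α) (hs : ∀ a b, r a b → a ∈ s ∧ b ∈ s) :
    WellFounded r := by
  have h := Set.wellFoundedOn_iff.1 ((s : Set α).toFinite.wellFoundedOn (r := r))
  exact Subrelation.wf (fun {a b} hab => ⟨hab, hs a b hab⟩) h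

namespace PreHG

variable {T : PreHG} {j k l a b c x y W : ℕ}

theorem mem_delS {A : Finset ℕ} : x ∈ T.delS j A ↔ ∃ a ∈ A, x ∈ T.del j a :=
  Finset.mem_biUnion

theorem mem_gamS {A : Finset ℕ} : x ∈ T.gamS j A ↔ ∃ a ∈ A, T.gam j a = x :=
  Finset.mem_image

theorem mem_iota : x ∈ T.iota j a ↔
    x ∈ T.delS j (T.del (j+1) a) ∧ x ∈ T.gamS j (T.del (j+1) a) :=
  Finset.mem_inter

/-- `ι(S_{j+2})` is `T.iotaS j (T.faces (j+2))`. -/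
def iotaS (T : PreHG) (j : ℕ) (A : Finset ℕ) : Finset ℕ := A.biUnion (T.iota j)

theorem mem_iotaS {A : Finset ℕ} : x ∈ T.iotaS j A ↔ ∃ a ∈ A, x ∈ T.iota j a :=
  Finset.mem_biUnion

theorem faces_nonempty_of_le {F : ℕ → Finset ℕ} {g : ℕ → ℕ → ℕ}
    (hg : ∀ l a, a ∈ F (l+1) → g l a ∈ F l) {m : ℕ} (hm : (F m).Nonempty) (hl : l ≤ m) :
    (F l).Nonempty := by
  induction m with
  | zero => rwa [Nat.le_zero.1 hl]
  | succ m ih =>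
    rcases Nat.of_le_succ hl with hl | rfl
    · obtain ⟨a, ha⟩ := hm
      exact ih ⟨_, hg m a ha⟩ hl
    · exact hm

theorem not_ltPlus_of_not_mem_gamS (hb : b ∉ T.gamS j (T.faces (j+1))) :
    ¬ T.ltPlus j a b := by
  rw [ltPlus, TransGen.tail'_iff]
  rintro ⟨c, -, α, hα, -, rfl⟩
  exact hb (mem_gamS.2 ⟨α, hα, rfl⟩)

theorem not_ltPlus_of_not_mem_delS (ha : a ∉ T.delS j (T.faces (j+1))) :
    ¬ T.ltPlus j a b := by
  rw [ltPlus, TransGen.head'_iff]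
  rintro ⟨c, ⟨α, hα, haα, -⟩, -⟩
  exact ha (mem_delS.2 ⟨α, hα, haα⟩)

theorem ltPlus_gam_of_ltMinus (h : T.ltMinus (j+1) a b) :
    T.ltPlus j (T.gam j a) (T.gam j b) :=
  TransGen.lift (T.gam j) (fun _ b h => ⟨b, h.2.1, h.2.2, rfl⟩) _ _ h

theorem exists_ltMinus_of_ltPlus (h : T.ltPlus j b c) (ha : a ∈ T.faces (j+1))
    (hc : c ∈ T.del j a) : ∃ w ∈ T.faces (j+1), b ∈ T.del j w ∧ T.ltMinus (j+1) w a := by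
  induction h using TransGen.head_induction_on with
  | single h =>
    obtain ⟨w, hw, hbw, rfl⟩ := h
    exact ⟨w, hw, hbw, .single ⟨hw, ha, hc⟩⟩
  | head h _ ih =>
    obtain ⟨w, hw, hbw, rfl⟩ := h
    obtain ⟨w', hw', hw'', hw'a⟩ := ih
    exact ⟨w, hw, hbw, .head ⟨hw, hw', hw''⟩ hw'a⟩

section IsPFS

variable (hT : T.IsPFS)
include hT

theorem IsPFS.globular : T.Globular := hT.2.2.1

theorem IsPFS.pencil : T.Pencil := hT.2.2.2.2.2.2

theorem IsPFS.gam_mem (h : a ∈ T.faces (j+1)) : T.gam j a ∈ T.faces j := hT.1.1 j a h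

theorem IsPFS.del_subset (h : a ∈ T.faces (j+1)) : T.del j a ⊆ T.faces j := hT.1.2.1 j a h

theorem IsPFS.del_nonempty (h : a ∈ T.faces (j+1)) : (T.del j a).Nonempty :=
  hT.1.2.2.1 j a h

theorem IsPFS.mem_of_ltPlusOne (h : T.ltPlusOne j a b) : a ∈ T.faces j ∧ b ∈ T.faces j := by
  obtain ⟨α, hα, ha, rfl⟩ := h
  exact ⟨hT.del_subset hα ha, hT.gam_mem hα⟩

theorem IsPFS.mem_of_ltPlus (h : T.ltPlus j a b) : a ∈ T.faces j ∧ b ∈ T.faces j := by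
  induction h with
  | single h => exact hT.mem_of_ltPlusOne h
  | tail _ h ih => exact ⟨ih.1, (hT.mem_of_ltPlusOne h).2⟩

theorem IsPFS.ltPlus_irrefl (a : ℕ) : ¬ T.ltPlus j a a :=
  fun h => hT.2.2.2.1 j a (hT.mem_of_ltPlus h).1 h

theorem IsPFS.eq_of_reflTransGen (hab : ReflTransGen (T.ltPlusOne j) a b)
    (hba : ReflTransGen (T.ltPlusOne j) b a) : a = b := by
  rcases reflTransGen_iff_eq_or_transGen.1 hab with rfl | hab
  · rfl
  rcases reflTransGen_iff_eq_or_transGen.1 hba with rfl | hba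
  · rfl
  exact absurd (hab.trans hba) (hT.ltPlus_irrefl a)

theorem IsPFS.isStrictOrder : IsStrictOrder ℕ (T.ltPlus j) where
  irrefl := hT.ltPlus_irrefl
  trans _ _ _ := TransGen.trans

theorem IsPFS.wellFounded_ltPlus : WellFounded (T.ltPlus j) :=
  have := hT.isStrictOrder (j := j)
  wellFounded_of_isStrictOrder_of_mem (T.faces j) fun _ _ => hT.mem_of_ltPlus

theorem IsPFS.wellFounded_swap_ltPlus : WellFounded (Function.swap (T.ltPlus j)) :=
  have := hT.isStrictOrder (j := j)
  wellFounded_of_isStrictOrder_of_mem (T.faces j) fun _ _ h => (hT.mem_of_ltPlus h).symm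

theorem IsPFS.gam_gam_mem_gamS (hW : W ∈ T.faces (j+2)) :
    T.gam j (T.gam (j+1) W) ∈ T.gamS j (T.del (j+1) W) :=
  (Finset.mem_sdiff.1 ((hT.globular j W hW).1 ▸ Finset.mem_singleton_self _)).1

theorem IsPFS.gam_gam_not_mem_delS (hW : W ∈ T.faces (j+2)) :
    T.gam j (T.gam (j+1) W) ∉ T.delS j (T.del (j+1) W) :=
  (Finset.mem_sdiff.1 ((hT.globular j W hW).1 ▸ Finset.mem_singleton_self _)).2

theorem IsPFS.eq_gam_gam (hW : W ∈ T.faces (j+2)) (hc : c ∈ T.gamS j (T.del (j+1) W))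
    (hc' : c ∉ T.delS j (T.del (j+1) W)) : c = T.gam j (T.gam (j+1) W) :=
  Finset.mem_singleton.1 ((hT.globular j W hW).1 ▸ Finset.mem_sdiff.2 ⟨hc, hc'⟩)

theorem IsPFS.mem_del_gam_iff (hW : W ∈ T.faces (j+2)) :
    x ∈ T.del j (T.gam (j+1) W) ↔
      x ∈ T.delS j (T.del (j+1) W) ∧ x ∉ T.gamS j (T.del (j+1) W) := by
  rw [(hT.globular j W hW).2, Finset.mem_sdiff]

theorem IsPFS.reflTransGen_gam_gam {r : ℕ → ℕ → Prop} (hW : W ∈ T.faces (j+2))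
    (hr : ∀ t ∈ T.del (j+1) W, ∀ c ∈ T.del j t, ReflTransGen r c (T.gam j t))
    (hc : c ∈ T.gamS j (T.del (j+1) W)) : ReflTransGen r c (T.gam j (T.gam (j+1) W)) := by
  induction c using WellFounded.induction (hT.wellFounded_swap_ltPlus (j := j)) with
  | h c ih =>
  by_cases hcd : c ∈ T.delS j (T.del (j+1) W)
  · obtain ⟨t, ht, hct⟩ := mem_delS.1 hcd
    have hlt : T.ltPlusOne j c (T.gam j t) := ⟨t, hT.del_subset hW ht, hct, rfl⟩
    exact (hr t ht c hct).trans (ih _ (.single hlt) (mem_gamS.2 ⟨t, ht, rfl⟩))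
  · rw [← hT.eq_gam_gam hW hc hcd]

theorem IsPFS.gam_mono (h : ReflTransGen (T.ltPlusOne (j+1)) a b) :
    ReflTransGen (T.ltPlusOne j) (T.gam j a) (T.gam j b) := by
  refine ReflTransGen.lift' (T.gam j) (fun a b hab => ?_) _ _ h
  obtain ⟨W, hW, ha, rfl⟩ := hab
  exact hT.reflTransGen_gam_gam hW
    (fun t ht c hc => .single ⟨t, hT.del_subset hW ht, hc, rfl⟩) (mem_gamS.2 ⟨a, ha, rfl⟩)

theorem IsPFS.gam_eq_of_between (hab : T.ltPlusOne (j+1) a b)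
    (hbc : ReflTransGen (T.ltPlusOne (j+1)) b c) (hac : T.gam j a = T.gam j c) :
    T.gam j b = T.gam j c :=
  hT.eq_of_reflTransGen (hT.gam_mono hbc) (hac ▸ hT.gam_mono (.single hab))

theorem IsPFS.exists_mem_del_gam {Ω : ℕ} (hΩ : Ω ∈ T.faces (j+2)) {P : ℕ → Prop}
    (hP : ∀ V ∈ T.del (j+1) Ω, P (T.gam j V) → ∃ t ∈ T.del j V, P t)
    (hb : b ∈ T.delS j (T.del (j+1) Ω)) (hPb : P b) :
    ∃ b' ∈ T.del j (T.gam (j+1) Ω), P b' := by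
  induction b using WellFounded.induction (hT.wellFounded_ltPlus (j := j)) with
  | h b ih =>
  by_cases hbg : b ∈ T.gamS j (T.del (j+1) Ω)
  · obtain ⟨V, hV, rfl⟩ := mem_gamS.1 hbg
    obtain ⟨t, ht, hPt⟩ := hP V hV hPb
    exact ih t (.single ⟨V, hT.del_subset hΩ hV, ht, rfl⟩) (mem_delS.2 ⟨V, hV, ht⟩) hPt
  · exact ⟨b, (hT.mem_del_gam_iff hΩ).2 ⟨hb, hbg⟩, hPb⟩

theorem IsPFS.exists_mem_del_of_reflTransGen (h : ReflTransGen (T.ltPlusOne (j+1)) a b)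
    (hx : x ∈ T.del j a) : ∃ x' ∈ T.del j b, ReflTransGen (T.ltPlusOne j) x' x := by
  induction h with
  | refl => exact ⟨x, hx, .refl⟩
  | tail _ hcd ih =>
    obtain ⟨x₁, hx₁, hx₁x⟩ := ih
    obtain ⟨Ω, hΩ, hcΩ, rfl⟩ := hcd
    refine hT.exists_mem_del_gam hΩ (fun V hV hVx => ?_) (mem_delS.2 ⟨_, hcΩ, hx₁⟩) hx₁x
    have hVf := hT.del_subset hΩ hV
    obtain ⟨t, ht⟩ := hT.del_nonempty hVf
    exact ⟨t, ht, .head ⟨V, hVf, ht, rfl⟩ hVx⟩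

theorem IsPFS.not_ltPlus_of_mem_del (ha : a ∈ T.faces (j+1)) (hb : b ∈ T.del j a)
    (hc : c ∈ T.del j a) : ¬ T.ltPlus j b c := by
  intro hbc
  obtain ⟨w, hw, hbw, hwa⟩ := exists_ltMinus_of_ltPlus hbc ha hc
  rcases (hT.pencil j b).2 w a hw ha hbw hb with rfl | hperp
  · exact hT.ltPlus_irrefl _ (ltPlus_gam_of_ltMinus hwa)
  · exact hT.2.2.2.2.2.1 j w a hw ha ⟨hperp, .inl hwa⟩

end IsPFS

def restrict (T : PreHG) (F : ℕ → Finset ℕ) : PreHG := ⟨F, T.gam, T.del⟩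

theorem ltPlus_of_ltPlus_restrict {F : ℕ → Finset ℕ} (hF : ∀ l, F l ⊆ T.faces l)
    (h : (T.restrict F).ltPlus j a b) : T.ltPlus j a b :=
  TransGen.mono (fun _ _ ⟨α, hα, h⟩ => ⟨α, hF _ hα, h⟩) _ _ h

theorem ltMinus_of_ltMinus_restrict {F : ℕ → Finset ℕ} (hF : ∀ l, F l ⊆ T.faces l)
    (h : (T.restrict F).ltMinus j a b) : T.ltMinus j a b := by
  refine TransGen.mono (fun a b hab => ?_) _ _ h
  cases j with
  | zero => exact hab.elim
  | succ j => exact ⟨hF _ hab.1, hF _ hab.2.1, hab.2.2⟩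

theorem IsPFS.restrict (hT : T.IsPFS) {F : ℕ → Finset ℕ} (hF : ∀ l, F l ⊆ T.faces l)
    (hgam : ∀ l a, a ∈ F (l+1) → T.gam l a ∈ F l)
    (hdel : ∀ l a, a ∈ F (l+1) → T.del l a ⊆ F l) {m : ℕ} (hne : (F m).Nonempty)
    (hlt : ∀ l a b, a ∈ F l → b ∈ F l → T.ltPlus l a b → (T.restrict F).ltPlus l a b) :
    (T.restrict F).IsPFS := by
  obtain ⟨⟨-, -, hδne, hδ₀, N, hN⟩, -, hglob, hstrict, hlin, hdisj, hpencil⟩ := hT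
  have hperp : ∀ l a b, a ∈ F l → b ∈ F l → T.perpPlus l a b →
      (T.restrict F).perpPlus l a b := fun l a b ha hb =>
    Or.imp (hlt l a b ha hb) (hlt l b a hb ha)
  refine ⟨⟨hgam, hdel, fun l a ha => hδne l a (hF _ ha), fun a ha => hδ₀ a (hF _ ha),
    N, fun l hl => Finset.subset_empty.1 (hN l hl ▸ hF l)⟩,
    faces_nonempty_of_le hgam hne (Nat.zero_le m), fun l a ha => hglob l a (hF _ ha),
    fun l a ha h => hstrict l a (hF _ ha) (ltPlus_of_ltPlus_restrict hF h),
    fun a ha b hb => ?_, fun l a b ha hb h => ?_, fun l x => ⟨?_, ?_⟩⟩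
  · rcases hlin a (hF _ ha) b (hF _ hb) with h | h | h
    · exact .inl h
    · exact .inr (.inl (hlt 0 a b ha hb h))
    · exact .inr (.inr (hlt 0 b a hb ha h))
  · exact hdisj l a b (hF _ ha) (hF _ hb)
      ⟨h.1.imp (ltPlus_of_ltPlus_restrict hF) (ltPlus_of_ltPlus_restrict hF),
        h.2.imp (ltMinus_of_ltMinus_restrict hF) (ltMinus_of_ltMinus_restrict hF)⟩
  · intro a b ha hb hxa hxb
    exact ((hpencil l x).1 a b (hF _ ha) (hF _ hb) hxa hxb).imp_right (hperp _ a b ha hb)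
  · intro a b ha hb hxa hxb
    exact ((hpencil l x).2 a b (hF _ ha) (hF _ hb) hxa hxb).imp_right (hperp _ a b ha hb)

/-- A step through a removed face `γ(W)` is rerouted through the faces of `δ(W)`. -/
theorem IsPFS.ltPlus_restrict_of_removed_subset_gamS (hT : T.IsPFS) {F : ℕ → Finset ℕ}
    (hF : ∀ w ∈ T.faces (j+1), w ∉ F (j+1) → w ∈ T.gamS (j+1) (T.faces (j+2)))
    (h : T.ltPlus j a b) : (T.restrict F).ltPlus j a b := by
  have hstep : ∀ w ∈ T.faces (j+1), ∀ x ∈ T.del j w,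
      ReflTransGen ((T.restrict F).ltPlusOne j) x (T.gam j w) := by
    intro w hw
    induction w using WellFounded.induction (hT.wellFounded_ltPlus (j := j+1)) with
    | h w ih =>
    intro x hx
    by_cases hwF : w ∈ F (j+1)
    · exact .single ⟨w, hwF, hx, rfl⟩
    obtain ⟨W, hW, rfl⟩ := mem_gamS.1 (hF w hw hwF)
    have hr : ∀ t ∈ T.del (j+1) W, ∀ x ∈ T.del j t,
        ReflTransGen ((T.restrict F).ltPlusOne j) x (T.gam j t) := fun t ht =>
      ih t (.single ⟨W, hW, ht, rfl⟩) (hT.del_subset hW ht)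
    obtain ⟨β, hβ, hxβ⟩ := mem_delS.1 ((hT.mem_del_gam_iff hW).1 hx).1
    exact (hr β hβ x hxβ).trans (hT.reflTransGen_gam_gam hW hr (mem_gamS.2 ⟨β, hβ, rfl⟩))
  have h' := ReflTransGen.lift' id (fun x y ⟨w, hw, hxw, hwy⟩ => hwy ▸ hstep w hw x hxw)
    a b h.to_reflTransGen
  rcases reflTransGen_iff_eq_or_transGen.1 h' with rfl | h'
  · exact absurd h (hT.ltPlus_irrefl _)
  · exact h'

theorem IsPFS.exists_mem_sdiff_gamS (hT : T.IsPFS) (hk : (T.faces k).Nonempty) :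
    (T.faces k \ T.gamS k (T.faces (k+1))).Nonempty := by
  obtain ⟨m, hm, hmin⟩ := hT.wellFounded_ltPlus.has_min (T.faces k : Set ℕ) hk
  refine ⟨m, Finset.mem_sdiff.2 ⟨hm, fun hmγ => ?_⟩⟩
  obtain ⟨α, hα, rfl⟩ := mem_gamS.1 hmγ
  obtain ⟨x, hx⟩ := hT.del_nonempty hα
  exact hmin x (hT.del_subset hα hx) (.single ⟨α, hα, hx, rfl⟩)

theorem IsPFS.exists_mem_sdiff_delS (hT : T.IsPFS) (hk : (T.faces k).Nonempty) :
    (T.faces k \ T.delS k (T.faces (k+1))).Nonempty := by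
  obtain ⟨m, hm, hmax⟩ := hT.wellFounded_swap_ltPlus.has_min (T.faces k : Set ℕ) hk
  refine ⟨m, Finset.mem_sdiff.2 ⟨hm, fun hmδ => ?_⟩⟩
  obtain ⟨α, hα, hmα⟩ := mem_delS.1 hmδ
  exact hmax _ (hT.gam_mem hα) (.single ⟨α, hα, hmα, rfl⟩)

theorem dTrunc_eq_restrict : T.dTrunc k = T.restrict (T.dTrunc k).faces := rfl

theorem dTrunc_faces_of_lt (h : l < k) : (T.dTrunc k).faces l = T.faces l := if_pos h

theorem dTrunc_faces_self : (T.dTrunc k).faces k = T.faces k \ T.gamS k (T.faces (k+1)) := by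
  simp [dTrunc]

theorem dTrunc_faces_of_gt (h : k < l) : (T.dTrunc k).faces l = ∅ := by
  simp [dTrunc, h.not_gt, h.ne']

theorem dTrunc_faces_subset : (T.dTrunc k).faces l ⊆ T.faces l := by
  rcases lt_trichotomy l k with h | rfl | h
  · rw [dTrunc_faces_of_lt h]
  · rw [dTrunc_faces_self]; exact Finset.sdiff_subset
  · rw [dTrunc_faces_of_gt h]; exact Finset.empty_subset _

theorem lt_of_mem_dTrunc_faces (h : a ∈ (T.dTrunc k).faces (l+1)) : l < k := by
  by_contra hl
  rw [dTrunc_faces_of_gt (by omega)] at h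
  exact Finset.notMem_empty a h

theorem IsPFS.dTrunc (hT : T.IsPFS) (hk : (T.faces k).Nonempty) :
    (T.dTrunc k).IsPFS ∧ (T.dTrunc k).dimIs k := by
  have hne : ((T.dTrunc k).faces k).Nonempty :=
    dTrunc_faces_self (T := T) ▸ hT.exists_mem_sdiff_gamS hk
  refine ⟨?_, hne, fun _ => dTrunc_faces_of_gt⟩
  rw [dTrunc_eq_restrict]
  refine hT.restrict (fun _ => dTrunc_faces_subset) (fun l a ha => ?_) (fun l a ha => ?_) hne
    (fun l a b ha hb h => ?_)
  · rw [dTrunc_faces_of_lt (lt_of_mem_dTrunc_faces ha)]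
    exact hT.gam_mem (dTrunc_faces_subset ha)
  · rw [dTrunc_faces_of_lt (lt_of_mem_dTrunc_faces ha)]
    exact hT.del_subset (dTrunc_faces_subset ha)
  · obtain hl | rfl | hl := lt_trichotomy l k
    · refine hT.ltPlus_restrict_of_removed_subset_gamS (fun w hw hwF => ?_) h
      obtain rfl : l + 1 = k := by
        by_contra hlk
        exact hwF (by rwa [dTrunc_faces_of_lt (by omega : l + 1 < k)])
      by_contra hwγ
      exact hwF (dTrunc_faces_self ▸ Finset.mem_sdiff.2 ⟨hw, hwγ⟩)
    · rw [dTrunc_faces_self] at hb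
      exact absurd h (not_ltPlus_of_not_mem_gamS (Finset.mem_sdiff.1 hb).2)
    · rw [dTrunc_faces_of_gt hl] at ha
      exact absurd ha (Finset.notMem_empty a)

/-- The witness `v` is replaced by `γ(A)` for the `(j+2)`-face `A` with `v ∈ δ(A)`, as long as
`c` stays in its domain. -/
theorem IsPFS.external_or_mem_iota (hT : T.IsPFS) {v : ℕ} (hv : v ∈ T.faces (j+1))
    (hcv : c ∈ T.del j v) (hgv : T.gam j v = b) (hb : b ∉ T.iotaS j (T.faces (j+2))) :
    (∃ α ∈ T.faces (j+1), α ∉ T.delS (j+1) (T.faces (j+2)) ∧ c ∈ T.del j α ∧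
        T.gam j α = b) ∨
      ∃ A ∈ T.faces (j+2), c ∈ T.iota j A ∧ T.gam j (T.gam (j+1) A) = b := by
  induction v using WellFounded.induction (hT.wellFounded_swap_ltPlus (j := j+1)) with
  | h v ih =>
  by_cases hve : v ∈ T.delS (j+1) (T.faces (j+2))
  · obtain ⟨A, hA, hvA⟩ := mem_delS.1 hve
    have hbA : b = T.gam j (T.gam (j+1) A) := by
      refine hT.eq_gam_gam hA (mem_gamS.2 ⟨v, hvA, hgv⟩) fun hbδ => hb ?_
      exact mem_iotaS.2 ⟨A, hA, mem_iota.2 ⟨hbδ, mem_gamS.2 ⟨v, hvA, hgv⟩⟩⟩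
    have hcδ : c ∈ T.delS j (T.del (j+1) A) := mem_delS.2 ⟨v, hvA, hcv⟩
    by_cases hcγ : c ∈ T.gamS j (T.del (j+1) A)
    · exact .inr ⟨A, hA, mem_iota.2 ⟨hcδ, hcγ⟩, hbA.symm⟩
    · exact ih _ (.single ⟨A, hA, hvA, rfl⟩) (hT.gam_mem hA)
        ((hT.mem_del_gam_iff hA).2 ⟨hcδ, hcγ⟩) hbA.symm
  · exact .inl ⟨v, hv, hve, hcv, hgv⟩

section Top

variable (hT : T.IsPFS) (htop : T.faces (j+3) = ∅)
include hT htop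

theorem IsPFS.eq_of_mem_del_of_mem_del {A A' β : ℕ} (hA : A ∈ T.faces (j+2))
    (hA' : A' ∈ T.faces (j+2)) (h : β ∈ T.del (j+1) A) (h' : β ∈ T.del (j+1) A') :
    A = A' := by
  refine ((hT.pencil (j+1) β).2 A A' hA hA' h h').resolve_right fun hperp => ?_
  have hnot : ∀ a b, ¬ T.ltPlus (j+2) a b := fun a b =>
    not_ltPlus_of_not_mem_gamS (by simp [htop, gamS])
  exact hperp.elim (hnot _ _) (hnot _ _)

theorem IsPFS.reflTransGen_gam_of_ltPlus {A β α : ℕ} (hA : A ∈ T.faces (j+2))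
    (hβ : β ∈ T.del (j+1) A) (h : T.ltPlus (j+1) β α) :
    ReflTransGen (T.ltPlusOne (j+1)) (T.gam (j+1) A) α := by
  obtain ⟨_, ⟨V, hV, hβV, rfl⟩, h⟩ := TransGen.head'_iff.1 h
  rwa [hT.eq_of_mem_del_of_mem_del htop hV hA hβV hβ] at h

theorem IsPFS.not_mem_iotaS_of_mem_del {α : ℕ} (hα : α ∈ T.faces (j+1))
    (hαe : α ∉ T.delS (j+1) (T.faces (j+2))) (hx : x ∈ T.del j α) :
    x ∉ T.iotaS j (T.faces (j+2)) := by
  intro hxI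
  obtain ⟨A, hA, hxA⟩ := mem_iotaS.1 hxI
  obtain ⟨β₁, hβ₁, hxβ₁⟩ := mem_delS.1 (mem_iota.1 hxA).1
  obtain ⟨β₂, hβ₂, rfl⟩ := mem_gamS.1 (mem_iota.1 hxA).2
  have hβ₁f := hT.del_subset hA hβ₁
  rcases (hT.pencil j _).2 α β₁ hα hβ₁f hx hxβ₁ with rfl | hlt | hlt
  · exact hαe (mem_delS.2 ⟨A, hA, hβ₁⟩)
  · exact not_ltPlus_of_not_mem_delS hαe hlt
  -- a face of `δ(β₂)`, which lies below `x = γ(β₂)`, is transported into `δ(α)`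
  have hβ₂α : ReflTransGen (T.ltPlusOne (j+1)) β₂ α :=
    .head ⟨A, hA, hβ₂, rfl⟩ (hT.reflTransGen_gam_of_ltPlus htop hA hβ₁ hlt)
  obtain ⟨z, hz⟩ := hT.del_nonempty (hT.del_subset hA hβ₂)
  obtain ⟨z', hz', hz'z⟩ := hT.exists_mem_del_of_reflTransGen hβ₂α hz
  exact hT.not_ltPlus_of_mem_del hα hz' hx
    (TransGen.tail' hz'z ⟨β₂, hT.del_subset hA hβ₂, hz, rfl⟩)

theorem IsPFS.gam_not_mem_iotaS {α : ℕ} (hα : α ∈ T.faces (j+1))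
    (hαe : α ∉ T.delS (j+1) (T.faces (j+2))) :
    T.gam j α ∉ T.iotaS j (T.faces (j+2)) := by
  intro hxI
  obtain ⟨A, hA, hxA⟩ := mem_iotaS.1 hxI
  obtain ⟨β₂, hβ₂, hγβ₂⟩ := mem_gamS.1 (mem_iota.1 hxA).2
  rcases (hT.pencil j _).1 α β₂ hα (hT.del_subset hA hβ₂) rfl hγβ₂ with rfl | hlt | hlt
  · exact hαe (mem_delS.2 ⟨A, hA, hβ₂⟩)
  · exact not_ltPlus_of_not_mem_delS hαe hlt
  have hγγ := hT.gam_eq_of_between ⟨A, hA, hβ₂, rfl⟩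
    (hT.reflTransGen_gam_of_ltPlus htop hA hβ₂ hlt) hγβ₂
  exact hT.gam_gam_not_mem_delS hA (hγγ ▸ (mem_iota.1 hxA).1)

theorem IsPFS.iota_step_back {A : ℕ} (hA : A ∈ T.faces (j+2)) (hy : y ∈ T.iota j A)
    (hxy : T.ltPlusOne j x y) :
    T.ltPlusOne j x (T.gam j (T.gam (j+1) A)) ∨ x ∈ T.iota j A ∨
      ∃ W ∈ T.faces (j+2), x ∈ T.iota j W ∧ T.gam j (T.gam (j+1) W) = y := by
  obtain ⟨β₁, hβ₁, hyβ₁⟩ := mem_delS.1 (mem_iota.1 hy).1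
  obtain ⟨β₂, hβ₂, hγβ₂⟩ := mem_gamS.1 (mem_iota.1 hy).2
  obtain ⟨w, hw, hxw, hgw⟩ := hxy
  induction w using WellFounded.induction (hT.wellFounded_swap_ltPlus (j := j+1)) with
  | h w ih =>
  rcases (hT.pencil j y).1 w β₂ hw (hT.del_subset hA hβ₂) hgw hγβ₂
    with rfl | hlt | hlt
  · have hxδ : x ∈ T.delS j (T.del (j+1) A) := mem_delS.2 ⟨w, hβ₂, hxw⟩
    by_cases hxγ : x ∈ T.gamS j (T.del (j+1) A)
    · exact .inr (.inl (mem_iota.2 ⟨hxδ, hxγ⟩))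
    · exact .inl ⟨_, hT.gam_mem hA, (hT.mem_del_gam_iff hA).2 ⟨hxδ, hxγ⟩, rfl⟩
  · obtain ⟨_, ⟨W, hW, hwW, rfl⟩, hWβ₂⟩ := TransGen.head'_iff.1 hlt
    have hγγ : T.gam j (T.gam (j+1) W) = y :=
      (hT.gam_eq_of_between ⟨W, hW, hwW, rfl⟩ hWβ₂ (hgw.trans hγβ₂.symm)).trans hγβ₂
    have hxδ : x ∈ T.delS j (T.del (j+1) W) := mem_delS.2 ⟨w, hwW, hxw⟩
    by_cases hxγ : x ∈ T.gamS j (T.del (j+1) W)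
    · exact .inr (.inr ⟨W, hW, mem_iota.2 ⟨hxδ, hxγ⟩, hγγ⟩)
    · exact ih _ (.single ⟨W, hW, hwW, rfl⟩) (hT.gam_mem hW)
        ((hT.mem_del_gam_iff hW).2 ⟨hxδ, hxγ⟩) hγγ
  · have hγγ := hT.gam_eq_of_between ⟨A, hA, hβ₂, rfl⟩
      (hT.reflTransGen_gam_of_ltPlus htop hA hβ₂ hlt) (hγβ₂.trans hgw.symm)
    exact absurd (mem_delS.2 ⟨β₁, hβ₁, (hγγ.trans hgw) ▸ hyβ₁⟩)
      (hT.gam_gam_not_mem_delS hA)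

theorem IsPFS.exists_relIter_gam_gam {n : ℕ} (ha : a ∉ T.iotaS j (T.faces (j+2)))
    (hax : RelIter (T.ltPlusOne j) n a x) {A : ℕ} (hA : A ∈ T.faces (j+2))
    (hx : x ∈ T.iota j A) :
    ∃ m ≤ n, RelIter (T.ltPlusOne j) m a (T.gam j (T.gam (j+1) A)) := by
  induction n using Nat.strong_induction_on generalizing x A with
  | _ n ih =>
  cases n with
  | zero =>
    cases hax
    exact absurd (mem_iotaS.2 ⟨A, hA, hx⟩) ha
  | succ n =>
    obtain ⟨x', hax', hx'x⟩ := hax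
    rcases hT.iota_step_back htop hA hx hx'x with h | hx' | ⟨W, hW, hx'W, hWx⟩
    · exact ⟨n + 1, le_rfl, x', hax', h⟩
    · obtain ⟨m, hm, h⟩ := ih n (by omega) hax' hA hx'
      exact ⟨m, by omega, h⟩
    · obtain ⟨m', hm', h'⟩ := ih n (by omega) hax' hW hx'W
      obtain ⟨m, hm, h⟩ := ih m' (by omega) (hWx ▸ h') hA hx
      exact ⟨m, by omega, h⟩

/-- Induction on the length of a chain: its last step `c ⊲⁺ b` lifts to an external witness,
or `c` is internal to some `A` with `γγ(A) = b`, and then the chain can be shortened. -/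
theorem IsPFS.ltPlus_restrict_of_not_mem_iotaS {F : ℕ → Finset ℕ}
    (hF : ∀ α ∈ T.faces (j+1), α ∉ T.delS (j+1) (T.faces (j+2)) → α ∈ F (j+1))
    (h : T.ltPlus j a b) (ha : a ∉ T.iotaS j (T.faces (j+2)))
    (hb : b ∉ T.iotaS j (T.faces (j+2))) : (T.restrict F).ltPlus j a b := by
  obtain ⟨L, hL⟩ := TransGen.exists_relIter h
  induction L using Nat.strong_induction_on generalizing b with
  | _ L ih =>
  obtain ⟨c, hac, v, hv, hcv, rfl⟩ := hL
  rcases hT.external_or_mem_iota hv hcv rfl hb with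
    ⟨α, hα, hαe, hcα, hγα⟩ | ⟨A, hA, hcA, hγγ⟩
  · have hcb : (T.restrict F).ltPlusOne j c (T.gam j v) := ⟨α, hF α hα hαe, hcα, hγα⟩
    cases L with
    | zero => cases hac; exact .single hcb
    | succ L =>
      have hcI : c ∉ T.iotaS j (T.faces (j+2)) := hT.not_mem_iotaS_of_mem_del htop hα hαe hcα
      exact (ih L (by omega) hac.transGen hcI hac).tail hcb
  · obtain ⟨m, hm, ham⟩ := hT.exists_relIter_gam_gam htop ha hac hA hcA
    rw [hγγ] at ham
    cases m with
    | zero => cases ham; exact absurd h (hT.ltPlus_irrefl _)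
    | succ m => exact ih m (by omega) ham.transGen hb ham

end Top

theorem cTrunc_eq_restrict : T.cTrunc k = T.restrict (T.cTrunc k).faces := rfl

theorem cTrunc_faces_of_succ_lt (h : l + 1 < k) : (T.cTrunc k).faces l = T.faces l :=
  if_pos h

theorem cTrunc_succ_faces_self :
    (T.cTrunc (l+1)).faces l = T.faces l \ T.iotaS l (T.faces (l+2)) := by
  simp [cTrunc, iotaS]

theorem cTrunc_faces_self : (T.cTrunc k).faces k = T.faces k \ T.delS k (T.faces (k+1)) := by
  simp [cTrunc]

theorem cTrunc_faces_of_gt (h : k < l) : (T.cTrunc k).faces l = ∅ := by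
  simp [cTrunc, show ¬ l + 1 < k by omega, show l + 1 ≠ k by omega, h.ne']

theorem cTrunc_faces_subset : (T.cTrunc k).faces l ⊆ T.faces l := by
  obtain h | rfl | rfl | h : l + 1 < k ∨ k = l + 1 ∨ k = l ∨ k < l := by omega
  · rw [cTrunc_faces_of_succ_lt h]
  · rw [cTrunc_succ_faces_self]; exact Finset.sdiff_subset
  · rw [cTrunc_faces_self]; exact Finset.sdiff_subset
  · rw [cTrunc_faces_of_gt h]; exact Finset.empty_subset _

theorem lt_of_mem_cTrunc_faces (h : a ∈ (T.cTrunc k).faces (l+1)) : l < k := by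
  by_contra hl
  rw [cTrunc_faces_of_gt (by omega)] at h
  exact Finset.notMem_empty a h

theorem IsPFS.ltPlus_cTrunc (hT : T.IsPFS) (htop : T.faces (k+2) = ∅)
    (ha : a ∈ (T.cTrunc k).faces l) (hb : b ∈ (T.cTrunc k).faces l) (h : T.ltPlus l a b) :
    (T.restrict (T.cTrunc k).faces).ltPlus l a b := by
  obtain hl | rfl | rfl | hl : l + 2 ≤ k ∨ k = l + 1 ∨ k = l ∨ k < l := by omega
  · refine hT.ltPlus_restrict_of_removed_subset_gamS (fun w hw hwF => ?_) h
    obtain rfl : k = l + 2 := by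
      by_contra hlk
      exact hwF (by rwa [cTrunc_faces_of_succ_lt (by omega : l + 1 + 1 < k)])
    rw [cTrunc_succ_faces_self, Finset.mem_sdiff, not_and_not_right] at hwF
    obtain ⟨A, hA, hwA⟩ := mem_iotaS.1 (hwF hw)
    obtain ⟨β, hβ, rfl⟩ := mem_gamS.1 (mem_iota.1 hwA).2
    exact mem_gamS.2 ⟨β, hT.del_subset hA hβ, rfl⟩
  · rw [cTrunc_succ_faces_self, Finset.mem_sdiff] at ha hb
    refine hT.ltPlus_restrict_of_not_mem_iotaS htop (fun α hα hαe => ?_) h ha.2 hb.2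
    rw [cTrunc_faces_self]
    exact Finset.mem_sdiff.2 ⟨hα, hαe⟩
  · rw [cTrunc_faces_self] at ha
    exact absurd h (not_ltPlus_of_not_mem_delS (Finset.mem_sdiff.1 ha).2)
  · rw [cTrunc_faces_of_gt hl] at ha
    exact absurd ha (Finset.notMem_empty a)

theorem IsPFS.cTrunc_of_dimIs_succ (hT : T.IsPFS) (hdim : T.dimIs (k+1)) :
    (T.cTrunc k).IsPFS ∧ (T.cTrunc k).dimIs k := by
  have htop : T.faces (k+2) = ∅ := hdim.2 _ (by omega)
  have hne : ((T.cTrunc k).faces k).Nonempty :=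
    cTrunc_faces_self (T := T) ▸ hT.exists_mem_sdiff_delS
      (faces_nonempty_of_le (fun _ _ => hT.gam_mem) hdim.1 k.le_succ)
  refine ⟨?_, hne, fun _ => cTrunc_faces_of_gt⟩
  rw [cTrunc_eq_restrict]
  refine hT.restrict (fun _ => cTrunc_faces_subset) (fun l a ha => ?_) (fun l a ha => ?_) hne
    fun l a b ha hb h => hT.ltPlus_cTrunc htop ha hb h
  · obtain hl | rfl : l + 1 < k ∨ k = l + 1 := by have := lt_of_mem_cTrunc_faces ha; omega
    · rw [cTrunc_faces_of_succ_lt hl]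
      exact hT.gam_mem (cTrunc_faces_subset ha)
    · rw [cTrunc_faces_self, Finset.mem_sdiff] at ha
      rw [cTrunc_succ_faces_self, Finset.mem_sdiff]
      exact ⟨hT.gam_mem ha.1, hT.gam_not_mem_iotaS htop ha.1 ha.2⟩
  · obtain hl | rfl : l + 1 < k ∨ k = l + 1 := by have := lt_of_mem_cTrunc_faces ha; omega
    · rw [cTrunc_faces_of_succ_lt hl]
      exact hT.del_subset (cTrunc_faces_subset ha)
    · rw [cTrunc_faces_self, Finset.mem_sdiff] at ha
      rw [cTrunc_succ_faces_self]
      exact fun x hx => Finset.mem_sdiff.2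
        ⟨hT.del_subset ha.1 hx, hT.not_mem_iotaS_of_mem_del htop ha.1 ha.2 hx⟩

theorem cTrunc_delS {A : Finset ℕ} : (T.cTrunc k).delS l A = T.delS l A := rfl

theorem cTrunc_iotaS {A : Finset ℕ} : (T.cTrunc k).iotaS l A = T.iotaS l A := rfl

theorem IsPFS.iota_subset_iota_gam (hT : T.IsPFS) {Ω A : ℕ} (hΩ : Ω ∈ T.faces (l+3))
    (hA : A ∈ T.del (l+2) Ω) : T.iota l A ⊆ T.iota l (T.gam (l+2) Ω) := by
  intro x hx
  obtain ⟨β₁, hβ₁, hxβ₁⟩ := mem_delS.1 (mem_iota.1 hx).1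
  obtain ⟨β₂, hβ₂, hγβ₂⟩ := mem_gamS.1 (mem_iota.1 hx).2
  obtain ⟨d, hd, hxd⟩ := hT.exists_mem_del_gam (P := fun d => x ∈ T.del l d) hΩ
    (fun V hV hxV => mem_delS.1 ((hT.mem_del_gam_iff (hT.del_subset hΩ hV)).1 hxV).1)
    (mem_delS.2 ⟨A, hA, hβ₁⟩) hxβ₁
  obtain ⟨c, hc, hγc⟩ := hT.exists_mem_del_gam (P := fun c => T.gam l c = x) hΩ
    (fun V hV hγV => mem_gamS.1 (hγV ▸ hT.gam_gam_mem_gamS (hT.del_subset hΩ hV)))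
    (mem_delS.2 ⟨A, hA, hβ₂⟩) hγβ₂
  exact mem_iota.2 ⟨mem_delS.2 ⟨d, hd, hxd⟩, mem_gamS.2 ⟨c, hc, hγc⟩⟩

theorem IsPFS.iotaS_faces_sdiff_delS (hT : T.IsPFS) :
    T.iotaS l (T.faces (l+2) \ T.delS (l+2) (T.faces (l+3))) = T.iotaS l (T.faces (l+2)) := by
  refine subset_antisymm (Finset.biUnion_subset_biUnion_of_subset_left _ Finset.sdiff_subset)
    fun x hx => ?_
  obtain ⟨A, hA, hxA⟩ := mem_iotaS.1 hx
  induction A using WellFounded.induction (hT.wellFounded_swap_ltPlus (j := l+2)) with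
  | h A ih =>
  by_cases hAe : A ∈ T.delS (l+2) (T.faces (l+3))
  · obtain ⟨Ω, hΩ, hAΩ⟩ := mem_delS.1 hAe
    exact ih _ (.single ⟨Ω, hΩ, hAΩ, rfl⟩) (hT.gam_mem hΩ)
      (hT.iota_subset_iota_gam hΩ hAΩ hxA)
  · exact mem_iotaS.2 ⟨A, Finset.mem_sdiff.2 ⟨hA, hAe⟩, hxA⟩

theorem IsPFS.delS_faces_eq (hT : T.IsPFS) :
    T.delS k (T.faces (k+1)) =
      T.iotaS k (T.faces (k+2)) ∪ T.delS k (T.faces (k+1) \ T.delS (k+1) (T.faces (k+2))) := by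
  ext x
  simp only [Finset.mem_union]
  constructor
  · intro hx
    obtain ⟨B, hB, hxB⟩ := mem_delS.1 hx
    induction B using WellFounded.induction (hT.wellFounded_swap_ltPlus (j := k+1)) with
    | h B ih =>
    by_cases hBe : B ∈ T.delS (k+1) (T.faces (k+2))
    · obtain ⟨Ω, hΩ, hBΩ⟩ := mem_delS.1 hBe
      have hxδ : x ∈ T.delS k (T.del (k+1) Ω) := mem_delS.2 ⟨B, hBΩ, hxB⟩
      by_cases hxγ : x ∈ T.gamS k (T.del (k+1) Ω)
      · exact .inl (mem_iotaS.2 ⟨Ω, hΩ, mem_iota.2 ⟨hxδ, hxγ⟩⟩)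
      · exact ih _ (.single ⟨Ω, hΩ, hBΩ, rfl⟩) (hT.gam_mem hΩ)
          ((hT.mem_del_gam_iff hΩ).2 ⟨hxδ, hxγ⟩)
    · exact .inr (mem_delS.2 ⟨B, Finset.mem_sdiff.2 ⟨hB, hBe⟩, hxB⟩)
  · rintro (hx | hx)
    · obtain ⟨A, hA, hxA⟩ := mem_iotaS.1 hx
      obtain ⟨B, hB, hxB⟩ := mem_delS.1 (mem_iota.1 hxA).1
      exact mem_delS.2 ⟨B, hT.del_subset hA hB, hxB⟩
    · obtain ⟨B, hB, hxB⟩ := mem_delS.1 hx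
      exact mem_delS.2 ⟨B, (Finset.mem_sdiff.1 hB).1, hxB⟩

theorem IsPFS.cTrunc_cTrunc_succ (hT : T.IsPFS) : (T.cTrunc (k+1)).cTrunc k = T.cTrunc k := by
  suffices h : ∀ l, ((T.cTrunc (k+1)).cTrunc k).faces l = (T.cTrunc k).faces l from
    congrArg T.restrict (funext h)
  intro l
  obtain h | rfl | rfl | h : l + 1 < k ∨ k = l + 1 ∨ k = l ∨ k < l := by omega
  · rw [cTrunc_faces_of_succ_lt h, cTrunc_faces_of_succ_lt h, cTrunc_faces_of_succ_lt (by omega)]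
  · rw [cTrunc_succ_faces_self, cTrunc_succ_faces_self, cTrunc_iotaS, cTrunc_faces_self,
      cTrunc_faces_of_succ_lt (by omega), hT.iotaS_faces_sdiff_delS]
  · rw [cTrunc_faces_self, cTrunc_faces_self, cTrunc_delS, cTrunc_faces_self,
      cTrunc_succ_faces_self, sdiff_sdiff_left, Finset.sup_eq_union, ← hT.delS_faces_eq]
  · rw [cTrunc_faces_of_gt h, cTrunc_faces_of_gt h]

theorem cTrunc_of_dimIs {n : ℕ} (hdim : T.dimIs n) : T.cTrunc n = T := by
  suffices h : ∀ l, (T.cTrunc n).faces l = T.faces l from congrArg T.restrict (funext h)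
  intro l
  obtain h | rfl | rfl | h : l + 1 < n ∨ n = l + 1 ∨ n = l ∨ n < l := by omega
  · exact cTrunc_faces_of_succ_lt h
  · simp [cTrunc_succ_faces_self, hdim.2 (l+2) (by omega), iotaS]
  · simp [cTrunc_faces_self, hdim.2 (n+1) (by omega), delS]
  · rw [cTrunc_faces_of_gt h, hdim.2 l h]

theorem IsPFS.cTrunc {n : ℕ} (hT : T.IsPFS) (hdim : T.dimIs n) (hk : k ≤ n) :
    (T.cTrunc k).IsPFS ∧ (T.cTrunc k).dimIs k := by
  induction hk using Nat.decreasingInduction with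
  | self => rw [cTrunc_of_dimIs hdim]; exact ⟨hT, hdim⟩
  | of_succ k _ ih => rw [← hT.cTrunc_cTrunc_succ]; exact ih.1.cTrunc_of_dimIs_succ ih.2

end PreHG

/-- If `S` is a positive face structure of dimension `n ≥ k`, then
`d^{(k)}S` and `c^{(k)}S` are positive face structures of dimension `k`. -/
theorem stmt19 (S : PreHG) (hS : S.IsPFS) (n k : ℕ)
    (hdim : S.dimIs n) (hk : k ≤ n) :
    (S.dTrunc k).IsPFS ∧ (S.dTrunc k).dimIs k ∧
    (S.cTrunc k).IsPFS ∧ (S.cTrunc k).dimIs k := by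
  obtain ⟨hd, hd'⟩ := hS.dTrunc (PreHG.faces_nonempty_of_le (fun _ _ => hS.gam_mem) hdim.1 hk)
  exact ⟨hd, hd', hS.cTrunc hdim hk⟩
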